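/- arXiv:2409.14979 — 7 statements merged into one kernel-verified Lean document; each statement's English description precedes it below -/
import Mathlib

section
/- (Proposition 1) If the saddle point matrix A is invertible, then the condensed matrix Â is invertible. -/
open Matrix

/-- **Proposition 1.** If the saddle point matrix `A` is invertible, then the
condensed matrix `Â` is also invertible. -/
theorem condensed_matrix_invertible_of_saddle_invertible
    (nN nM nS : ℕ)
    (K_NN : Matrix (Fin nN) (Fin nN) ℝ) (K_MM : Matrix (Fin nM) (Fin nM) ℝ)
    (K_SS : Matrix (Fin nS) (Fin nS) ℝ)
    (K_NM : Matrix (Fin nN) (Fin nM) ℝ) (K_NS : Matrix (Fin nN) (Fin nS) ℝ)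
    (hNN : K_NN.IsSymm) (hMM : K_MM.IsSymm) (hSS : K_SS.IsSymm)
    (D : Matrix (Fin nS) (Fin nS) ℝ) (M : Matrix (Fin nS) (Fin nM) ℝ)
    (hD : IsUnit D.det)
    (P : Matrix (Fin nS) (Fin nM) ℝ) (hP : P = D⁻¹ * M)
    -- the saddle point matrix, block order N, M, S, λ
    (A : Matrix ((Fin nN ⊕ Fin nM) ⊕ (Fin nS ⊕ Fin nS))
                ((Fin nN ⊕ Fin nM) ⊕ (Fin nS ⊕ Fin nS)) ℝ)
    (hA : A = fromBlocks
      (fromBlocks K_NN K_NM K_NMᵀ K_MM)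
      (fromBlocks K_NS 0 0 (-Mᵀ))
      (fromBlocks K_NSᵀ 0 0 (-M))
      (fromBlocks K_SS Dᵀ D 0))
    -- the condensed matrix
    (Ahat : Matrix (Fin nN ⊕ Fin nM) (Fin nN ⊕ Fin nM) ℝ)
    (hAhat : Ahat = fromBlocks
      K_NN (K_NM + K_NS * P)
      (K_NMᵀ + Pᵀ * K_NSᵀ) (K_MM + Pᵀ * K_SS * P))
    (hAinv : IsUnit A.det) :
    IsUnit Ahat.det := by
  subst hP hA hAhat
  rw [isUnit_iff_ne_zero] at hAinv ⊢
  intro hdet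
  obtain ⟨v, hvne, hv0⟩ := Matrix.exists_mulVec_eq_zero_iff.mpr hdet
  set xN : Fin nN → ℝ := v ∘ Sum.inl with hxN
  set xM : Fin nM → ℝ := v ∘ Sum.inr with hxM
  set xS : Fin nS → ℝ := (D⁻¹ * M) *ᵥ xM with hxS
  set r : Fin nS → ℝ := K_NSᵀ *ᵥ xN + K_SS *ᵥ xS with hr
  set l : Fin nS → ℝ := -((Dᵀ)⁻¹ *ᵥ r) with hl
  have hDT : Dᵀ * (Dᵀ)⁻¹ = 1 := Matrix.mul_nonsing_inv _ (by rwa [Matrix.det_transpose])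
  have hDP : D * (D⁻¹ * M) = M := by
    rw [← Matrix.mul_assoc, Matrix.mul_nonsing_inv _ hD, Matrix.one_mul]
  rw [fromBlocks_mulVec] at hv0
  have eq1 : K_NN *ᵥ xN + (K_NM + K_NS * (D⁻¹ * M)) *ᵥ xM = 0 := by
    funext i; exact congrFun hv0 (Sum.inl i)
  have eq2 : (K_NMᵀ + (D⁻¹ * M)ᵀ * K_NSᵀ) *ᵥ xN + (K_MM + (D⁻¹ * M)ᵀ * K_SS * (D⁻¹ * M)) *ᵥ xM = 0 := by
    funext i; exact congrFun hv0 (Sum.inr i)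
  set w : (Fin nN ⊕ Fin nM) ⊕ (Fin nS ⊕ Fin nS) → ℝ :=
    Sum.elim (Sum.elim xN xM) (Sum.elim xS l) with hw
  have hwne : w ≠ 0 := by
    intro h
    apply hvne
    funext i
    cases i with
    | inl i => exact congrFun h (Sum.inl (Sum.inl i))
    | inr i => exact congrFun h (Sum.inl (Sum.inr i))
  have c1 : K_NN *ᵥ xN + K_NM *ᵥ xM + ((K_NS *ᵥ xS) + (0 : Matrix (Fin nN) (Fin nS) ℝ) *ᵥ l) = 0 := by
    rw [Matrix.zero_mulVec, add_zero, hxS, Matrix.mulVec_mulVec]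
    rw [Matrix.add_mulVec] at eq1
    linear_combination (norm := module) eq1
  have c2 : K_NMᵀ *ᵥ xN + K_MM *ᵥ xM + ((0 : Matrix (Fin nM) (Fin nS) ℝ) *ᵥ xS + (-Mᵀ) *ᵥ l) = 0 := by
    have hMl : (-Mᵀ) *ᵥ l = ((D⁻¹ * M)ᵀ * K_NSᵀ) *ᵥ xN + ((D⁻¹ * M)ᵀ * K_SS * (D⁻¹ * M)) *ᵥ xM := by
      rw [hl, Matrix.neg_mulVec, Matrix.mulVec_neg, neg_neg, Matrix.mulVec_mulVec]
      have : Mᵀ * (Dᵀ)⁻¹ = (D⁻¹ * M)ᵀ := by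
        rw [Matrix.transpose_mul, Matrix.transpose_nonsing_inv]
      rw [this, hr, Matrix.mulVec_add, Matrix.mulVec_mulVec, hxS, Matrix.mulVec_mulVec,
        Matrix.mulVec_mulVec, Matrix.mul_assoc]
    rw [Matrix.zero_mulVec, zero_add, hMl]
    rw [Matrix.add_mulVec, Matrix.add_mulVec] at eq2
    linear_combination (norm := module) eq2
  have c3 : K_NSᵀ *ᵥ xN + (0 : Matrix (Fin nS) (Fin nM) ℝ) *ᵥ xM + (K_SS *ᵥ xS + Dᵀ *ᵥ l) = 0 := by
    have hDl : Dᵀ *ᵥ l = -r := by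
      rw [hl, Matrix.mulVec_neg, Matrix.mulVec_mulVec, hDT, Matrix.one_mulVec]
    rw [Matrix.zero_mulVec, add_zero, hDl, hr]
    abel
  have c4 : (0 : Matrix (Fin nS) (Fin nN) ℝ) *ᵥ xN + (-M) *ᵥ xM + (D *ᵥ xS + (0 : Matrix (Fin nS) (Fin nS) ℝ) *ᵥ l) = 0 := by
    rw [Matrix.zero_mulVec, Matrix.zero_mulVec, zero_add, add_zero, hxS, Matrix.mulVec_mulVec,
      hDP, Matrix.neg_mulVec]
    abel
  apply hAinv
  rw [← Matrix.exists_mulVec_eq_zero_iff]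
  refine ⟨w, hwne, ?_⟩
  rw [hw, fromBlocks_mulVec]
  have h1 : (Sum.elim (Sum.elim xN xM) (Sum.elim xS l)) ∘ Sum.inl = Sum.elim xN xM := rfl
  have h2 : (Sum.elim (Sum.elim xN xM) (Sum.elim xS l)) ∘ Sum.inr = Sum.elim xS l := rfl
  rw [h1, h2, fromBlocks_mulVec, fromBlocks_mulVec, fromBlocks_mulVec, fromBlocks_mulVec]
  funext i
  rcases i with (i | i) | (i | i)
  · simpa using congrFun c1 i
  · simpa using congrFun c2 i
  · simpa using congrFun c3 i
  · simpa using congrFun c4 i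
end

section
/- (Proposition 2) If the displacement block K = [[K_NN, K_NM, K_NS], [K_MN, K_MM, 0], [K_SN, 0, K_SS]] (block order N, M, S) is positive semidefinite and the saddle point matrix A is invertible, then the condensed matrix Â is symmetric positive definite. -/
/-!
With `B = [[1, 0], [0, 1], [0, P]]` one has `Â = Bᵀ K B`, so `Â` is positive semidefinite.
If `xᵀ Â x = 0`, then `K (B x) = 0` because `K` is positive semidefinite; since `D P = M`,
the vector `(x, P x_M, 0)` then lies in the kernel of `A`, so `x = 0` as `A` is invertible.
-/

open Matrix

open scoped ComplexOrder in
theorem Matrix.PosSemidef.posDef_conjTranspose_mul_mul_same {n m 𝕜 : Type*} [Fintype n]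
    [Fintype m] [RCLike 𝕜] {A : Matrix n n 𝕜} {B : Matrix n m 𝕜} (hA : A.PosSemidef)
    (hB : ∀ x, A *ᵥ (B *ᵥ x) = 0 → x = 0) : (Bᴴ * A * B).PosDef := by
  refine PosDef.of_dotProduct_mulVec_pos (hA.conjTranspose_mul_mul_same B).isHermitian
    fun x hx => ?_
  have hq : star x ⬝ᵥ (Bᴴ * A * B) *ᵥ x = star (B *ᵥ x) ⬝ᵥ A *ᵥ (B *ᵥ x) := by
    simp only [star_mulVec, dotProduct_mulVec, vecMul_vecMul, mulVec_mulVec, Matrix.mul_assoc]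
  rw [hq]
  exact (hA.dotProduct_mulVec_nonneg _).lt_of_ne'
    fun h => hx (hB x ((hA.dotProduct_mulVec_zero_iff _).mp h))

namespace SaddlePoint

variable {n m s : Type*}

section Definitions

variable (K_NN : Matrix n n ℝ) (K_MM : Matrix m m ℝ) (K_SS : Matrix s s ℝ)
  (K_NM : Matrix n m ℝ) (K_NS : Matrix n s ℝ) (D : Matrix s s ℝ) (M P : Matrix s m ℝ)

def displacementMatrix : Matrix (n ⊕ (m ⊕ s)) (n ⊕ (m ⊕ s)) ℝ :=
  fromBlocks K_NN (fromCols K_NM K_NS) (fromRows K_NMᵀ K_NSᵀ) (fromBlocks K_MM 0 0 K_SS)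

def saddlePointMatrix : Matrix ((n ⊕ m) ⊕ (s ⊕ s)) ((n ⊕ m) ⊕ (s ⊕ s)) ℝ :=
  fromBlocks (fromBlocks K_NN K_NM K_NMᵀ K_MM) (fromBlocks K_NS 0 0 (-Mᵀ))
    (fromBlocks K_NSᵀ 0 0 (-M)) (fromBlocks K_SS Dᵀ D 0)

def condensedMatrix [Fintype s] : Matrix (n ⊕ m) (n ⊕ m) ℝ :=
  fromBlocks K_NN (K_NM + K_NS * P) (K_NMᵀ + Pᵀ * K_NSᵀ) (K_MM + Pᵀ * K_SS * P)

variable (n) in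
def prolongation [DecidableEq n] [DecidableEq m] : Matrix (n ⊕ (m ⊕ s)) (n ⊕ m) ℝ :=
  fromBlocks 1 0 0 (fromRows 1 P)

end Definitions

variable [Fintype n] [Fintype m] [Fintype s]
  {K_NN : Matrix n n ℝ} {K_MM : Matrix m m ℝ} {K_SS : Matrix s s ℝ}
  {K_NM : Matrix n m ℝ} {K_NS : Matrix n s ℝ} {D : Matrix s s ℝ} {M P : Matrix s m ℝ}

theorem condensedMatrix_eq [DecidableEq n] [DecidableEq m] :
    condensedMatrix K_NN K_MM K_SS K_NM K_NS P =
      (prolongation n P)ᵀ * displacementMatrix K_NN K_MM K_SS K_NM K_NS * prolongation n P := by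
  simp only [prolongation, displacementMatrix, condensedMatrix,
    fromBlocks_transpose, transpose_fromRows]
  rw [fromBlocks_multiply, fromBlocks_multiply]
  simp [fromCols_mul_fromBlocks, fromCols_mul_fromRows, Matrix.mul_assoc]

omit [Fintype s] in
theorem prolongation_mulVec [DecidableEq n] [DecidableEq m] (xN : n → ℝ) (xM : m → ℝ) :
    prolongation n P *ᵥ Sum.elim xN xM = Sum.elim xN (Sum.elim xM (P *ᵥ xM)) := by
  simp [prolongation, fromBlocks_mulVec, fromRows_mulVec]

theorem saddlePointMatrix_mulVec_eq_zero (xN : n → ℝ) (xM : m → ℝ) (y : s → ℝ)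
    (hK : displacementMatrix K_NN K_MM K_SS K_NM K_NS *ᵥ Sum.elim xN (Sum.elim xM y) = 0)
    (hy : D *ᵥ y = M *ᵥ xM) :
    saddlePointMatrix K_NN K_MM K_SS K_NM K_NS D M *ᵥ Sum.elim (Sum.elim xN xM) (Sum.elim y 0) =
      0 := by
  simp only [displacementMatrix, fromBlocks_mulVec, fromCols_mulVec, fromRows_mulVec,
    Sum.elim_comp_inl, Sum.elim_comp_inr, zero_mulVec, add_zero, zero_add, ← Sum.elim_add_add,
    ← Sum.elim_zero_zero, Sum.elim_eq_iff] at hK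
  obtain ⟨hN, hM, hS⟩ := hK
  simp only [saddlePointMatrix, fromBlocks_mulVec, Sum.elim_comp_inl, Sum.elim_comp_inr,
    zero_mulVec, mulVec_zero, add_zero, zero_add, neg_mulVec, ← Sum.elim_add_add,
    ← Sum.elim_zero_zero, Sum.elim_eq_iff]
  exact ⟨⟨by rwa [add_assoc], hM⟩, hS, by rw [hy, neg_add_cancel]⟩

end SaddlePoint

theorem condensed_matrix_posDef_general
    (nN nM nS : ℕ)
    (K_NN : Matrix (Fin nN) (Fin nN) ℝ) (K_MM : Matrix (Fin nM) (Fin nM) ℝ)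
    (K_SS : Matrix (Fin nS) (Fin nS) ℝ)
    (K_NM : Matrix (Fin nN) (Fin nM) ℝ) (K_NS : Matrix (Fin nN) (Fin nS) ℝ)
    (D : Matrix (Fin nS) (Fin nS) ℝ) (M : Matrix (Fin nS) (Fin nM) ℝ)
    (hD : IsUnit D.det)
    (P : Matrix (Fin nS) (Fin nM) ℝ) (hP : P = D⁻¹ * M)
    -- the displacement block K, block order N, M, S
    (K : Matrix (Fin nN ⊕ (Fin nM ⊕ Fin nS)) (Fin nN ⊕ (Fin nM ⊕ Fin nS)) ℝ)
    (hK : K = fromBlocks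
      K_NN (fromCols K_NM K_NS)
      (fromRows K_NMᵀ K_NSᵀ) (fromBlocks K_MM 0 0 K_SS))
    (hKpsd : K.PosSemidef)
    -- the saddle point matrix, block order N, M, S, λ
    (A : Matrix ((Fin nN ⊕ Fin nM) ⊕ (Fin nS ⊕ Fin nS))
                ((Fin nN ⊕ Fin nM) ⊕ (Fin nS ⊕ Fin nS)) ℝ)
    (hA : A = fromBlocks
      (fromBlocks K_NN K_NM K_NMᵀ K_MM)
      (fromBlocks K_NS 0 0 (-Mᵀ))
      (fromBlocks K_NSᵀ 0 0 (-M))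
      (fromBlocks K_SS Dᵀ D 0))
    -- the condensed matrix
    (Ahat : Matrix (Fin nN ⊕ Fin nM) (Fin nN ⊕ Fin nM) ℝ)
    (hAhat : Ahat = fromBlocks
      K_NN (K_NM + K_NS * P)
      (K_NMᵀ + Pᵀ * K_NSᵀ) (K_MM + Pᵀ * K_SS * P))
    (hAinv : IsUnit A.det) :
    Ahat.PosDef := by
  have hfactor : Ahat = (SaddlePoint.prolongation (Fin nN) P)ᴴ * K *
      SaddlePoint.prolongation (Fin nN) P := by
    rw [conjTranspose_eq_transpose_of_trivial, hK, hAhat]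
    exact SaddlePoint.condensedMatrix_eq
  have hAinj : Function.Injective A.mulVec :=
    mulVec_injective_iff_isUnit.mpr ((isUnit_iff_isUnit_det A).mpr hAinv)
  rw [hfactor]
  refine hKpsd.posDef_conjTranspose_mul_mul_same fun x hx => ?_
  obtain ⟨xN, xM, rfl⟩ : ∃ xN xM, x = Sum.elim xN xM :=
    ⟨x ∘ Sum.inl, x ∘ Sum.inr, (Sum.elim_comp_inl_inr x).symm⟩
  rw [SaddlePoint.prolongation_mulVec, hK] at hx
  have hAv : A *ᵥ Sum.elim (Sum.elim xN xM) (Sum.elim (P *ᵥ xM) 0) = 0 := by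
    rw [hA]
    refine SaddlePoint.saddlePointMatrix_mulVec_eq_zero xN xM _ hx ?_
    rw [hP, mulVec_mulVec, mul_nonsing_inv_cancel_left _ _ hD]
  have hv := hAinj (hAv.trans (mulVec_zero A).symm)
  rw [← Sum.elim_zero_zero, Sum.elim_eq_iff] at hv
  exact hv.1

/-- **Proposition 2.** If the displacement block `K` is positive semidefinite and
the saddle point matrix `A` is invertible, then the condensed matrix `Â` is
symmetric positive definite. -/
theorem condensed_matrix_posDef
    (nN nM nS : ℕ)
    (K_NN : Matrix (Fin nN) (Fin nN) ℝ) (K_MM : Matrix (Fin nM) (Fin nM) ℝ)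
    (K_SS : Matrix (Fin nS) (Fin nS) ℝ)
    (K_NM : Matrix (Fin nN) (Fin nM) ℝ) (K_NS : Matrix (Fin nN) (Fin nS) ℝ)
    (hNN : K_NN.IsSymm) (hMM : K_MM.IsSymm) (hSS : K_SS.IsSymm)
    (D : Matrix (Fin nS) (Fin nS) ℝ) (M : Matrix (Fin nS) (Fin nM) ℝ)
    (hD : IsUnit D.det)
    (P : Matrix (Fin nS) (Fin nM) ℝ) (hP : P = D⁻¹ * M)
    -- the displacement block K, block order N, M, S
    (K : Matrix (Fin nN ⊕ (Fin nM ⊕ Fin nS)) (Fin nN ⊕ (Fin nM ⊕ Fin nS)) ℝ)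
    (hK : K = fromBlocks
      K_NN (fromCols K_NM K_NS)
      (fromRows K_NMᵀ K_NSᵀ) (fromBlocks K_MM 0 0 K_SS))
    (hKpsd : K.PosSemidef)
    -- the saddle point matrix, block order N, M, S, λ
    (A : Matrix ((Fin nN ⊕ Fin nM) ⊕ (Fin nS ⊕ Fin nS))
                ((Fin nN ⊕ Fin nM) ⊕ (Fin nS ⊕ Fin nS)) ℝ)
    (hA : A = fromBlocks
      (fromBlocks K_NN K_NM K_NMᵀ K_MM)
      (fromBlocks K_NS 0 0 (-Mᵀ))
      (fromBlocks K_NSᵀ 0 0 (-M))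
      (fromBlocks K_SS Dᵀ D 0))
    -- the condensed matrix
    (Ahat : Matrix (Fin nN ⊕ Fin nM) (Fin nN ⊕ Fin nM) ℝ)
    (hAhat : Ahat = fromBlocks
      K_NN (K_NM + K_NS * P)
      (K_NMᵀ + Pᵀ * K_NSᵀ) (K_MM + Pᵀ * K_SS * P))
    (hAinv : IsUnit A.det) :
    Ahat.PosDef :=
  condensed_matrix_posDef_general nN nM nS K_NN K_MM K_SS K_NM K_NS D M hD P hP K hK hKpsd A hA Ahat
    hAhat hAinv
end

section
/- (Elimination soundness) Suppose the vectors d_N ∈ ℝ^{nN}, d_M ∈ ℝ^{nM}, d_S ∈ ℝ^{nS}, λ ∈ ℝ^{nS} satisfy A · (d_N, d_M, d_S, λ) = (f_N, f_M, f_S, 0) for given vectors f_N, f_M, f_S. Then: (i) d_S = P · d_M; (ii) λ = (Dᵀ)⁻¹ · (f_S − K_SN · d_N − K_SS · d_S); and (iii) Â · (d_N, d_M) = (f_N, f_M + Pᵀ · f_S). -/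
open Matrix

/-- **Elimination soundness.** If `(d_N, d_M, d_S, λ)` solves the saddle point
system `A · x = (f_N, f_M, f_S, 0)`, then (i) `d_S = P · d_M`,
(ii) `λ = (Dᵀ)⁻¹ · (f_S − K_SN · d_N − K_SS · d_S)`, and
(iii) `(d_N, d_M)` solves the condensed system
`Â · (d_N, d_M) = (f_N, f_M + Pᵀ · f_S)`. -/
theorem elimination_soundness
    (nN nM nS : ℕ)
    (K_NN : Matrix (Fin nN) (Fin nN) ℝ) (K_MM : Matrix (Fin nM) (Fin nM) ℝ)
    (K_SS : Matrix (Fin nS) (Fin nS) ℝ)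
    (K_NM : Matrix (Fin nN) (Fin nM) ℝ) (K_NS : Matrix (Fin nN) (Fin nS) ℝ)
    (hNN : K_NN.IsSymm) (hMM : K_MM.IsSymm) (hSS : K_SS.IsSymm)
    (D : Matrix (Fin nS) (Fin nS) ℝ) (M : Matrix (Fin nS) (Fin nM) ℝ)
    (hD : IsUnit D.det)
    (P : Matrix (Fin nS) (Fin nM) ℝ) (hP : P = D⁻¹ * M)
    -- the saddle point matrix, block order N, M, S, λ
    (A : Matrix ((Fin nN ⊕ Fin nM) ⊕ (Fin nS ⊕ Fin nS))
                ((Fin nN ⊕ Fin nM) ⊕ (Fin nS ⊕ Fin nS)) ℝ)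
    (hA : A = fromBlocks
      (fromBlocks K_NN K_NM K_NMᵀ K_MM)
      (fromBlocks K_NS 0 0 (-Mᵀ))
      (fromBlocks K_NSᵀ 0 0 (-M))
      (fromBlocks K_SS Dᵀ D 0))
    -- the condensed matrix
    (Ahat : Matrix (Fin nN ⊕ Fin nM) (Fin nN ⊕ Fin nM) ℝ)
    (hAhat : Ahat = fromBlocks
      K_NN (K_NM + K_NS * P)
      (K_NMᵀ + Pᵀ * K_NSᵀ) (K_MM + Pᵀ * K_SS * P))
    (dN fN : Fin nN → ℝ) (dM fM : Fin nM → ℝ) (dS lam fS : Fin nS → ℝ)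
    (hsol : A.mulVec (Sum.elim (Sum.elim dN dM) (Sum.elim dS lam)) =
      Sum.elim (Sum.elim fN fM) (Sum.elim fS 0)) :
    dS = P.mulVec dM ∧
    lam = (Dᵀ)⁻¹.mulVec (fS - K_NSᵀ.mulVec dN - K_SS.mulVec dS) ∧
    Ahat.mulVec (Sum.elim dN dM) = Sum.elim fN (fM + Pᵀ.mulVec fS) := by
  subst hA hAhat hP
  have h := fun x => congrFun hsol x
  have eN : K_NN.mulVec dN + K_NM.mulVec dM + K_NS.mulVec dS = fN := by
    funext i
    have := h (Sum.inl (Sum.inl i))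
    simpa [fromBlocks_mulVec, add_assoc] using this
  have eM : K_NMᵀ.mulVec dN + K_MM.mulVec dM - Mᵀ.mulVec lam = fM := by
    funext i
    have := h (Sum.inl (Sum.inr i))
    simp [fromBlocks_mulVec, neg_mulVec, Pi.neg_apply] at this
    simp only [Pi.sub_apply, Pi.add_apply]
    linarith
  have eS : K_NSᵀ.mulVec dN + K_SS.mulVec dS + Dᵀ.mulVec lam = fS := by
    funext i
    have := h (Sum.inr (Sum.inl i))
    simp [fromBlocks_mulVec] at this
    simp only [Pi.add_apply]
    linarith
  have eL : D.mulVec dS = M.mulVec dM := by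
    funext i
    have := h (Sum.inr (Sum.inr i))
    simp [fromBlocks_mulVec, neg_mulVec, Pi.neg_apply] at this
    linarith
  have hDi : D⁻¹ * D = 1 := nonsing_inv_mul D hD
  have hDT : IsUnit Dᵀ.det := by rwa [det_transpose]
  have hDTi : (Dᵀ)⁻¹ * Dᵀ = 1 := nonsing_inv_mul Dᵀ hDT
  have hdS : dS = (D⁻¹ * M).mulVec dM := by
    calc dS = (D⁻¹ * D).mulVec dS := by rw [hDi, one_mulVec]
    _ = D⁻¹.mulVec (D.mulVec dS) := by rw [← mulVec_mulVec]
    _ = D⁻¹.mulVec (M.mulVec dM) := by rw [eL]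
    _ = (D⁻¹ * M).mulVec dM := by rw [mulVec_mulVec]
  have hDP : D * (D⁻¹ * M) = M := by
    rw [← Matrix.mul_assoc, mul_nonsing_inv D hD, Matrix.one_mul]
  have hPTDT : (D⁻¹ * M)ᵀ * Dᵀ = Mᵀ := by
    rw [← transpose_mul, hDP]
  have hlam : lam = (Dᵀ)⁻¹.mulVec (fS - K_NSᵀ.mulVec dN - K_SS.mulVec dS) := by
    have e : Dᵀ.mulVec lam = fS - K_NSᵀ.mulVec dN - K_SS.mulVec dS := by
      rw [← eS]; abel
    calc lam = ((Dᵀ)⁻¹ * Dᵀ).mulVec lam := by rw [hDTi, one_mulVec]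
    _ = (Dᵀ)⁻¹.mulVec (Dᵀ.mulVec lam) := by rw [← mulVec_mulVec]
    _ = _ := by rw [e]
  refine ⟨hdS, hlam, ?_⟩
  funext x
  cases x with
  | inl i =>
    simp only [fromBlocks_mulVec, Sum.elim_inl, Pi.add_apply]
    have key : K_NN.mulVec dN + (K_NM + K_NS * (D⁻¹ * M)).mulVec dM = fN := by
      rw [add_mulVec, ← mulVec_mulVec, ← hdS, ← add_assoc, eN]
    exact congrFun key i
  | inr i =>
    simp only [fromBlocks_mulVec, Sum.elim_inr, Pi.add_apply]
    have key : (K_NMᵀ + (D⁻¹ * M)ᵀ * K_NSᵀ).mulVec dN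
        + (K_MM + (D⁻¹ * M)ᵀ * K_SS * (D⁻¹ * M)).mulVec dM
        = fM + (D⁻¹ * M)ᵀ.mulVec fS := by
      have h1 : ((D⁻¹ * M)ᵀ * K_SS * (D⁻¹ * M)).mulVec dM
          = (D⁻¹ * M)ᵀ.mulVec (K_SS.mulVec dS) := by
        simp [hdS, mulVec_mulVec, Matrix.mul_assoc]
      have h2 : (D⁻¹ * M)ᵀ.mulVec fS
          = (D⁻¹ * M)ᵀ.mulVec (K_NSᵀ.mulVec dN) + (D⁻¹ * M)ᵀ.mulVec (K_SS.mulVec dS)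
            + Mᵀ.mulVec lam := by
        rw [← eS, mulVec_add, mulVec_add, ← hPTDT, ← mulVec_mulVec]
      rw [add_mulVec, add_mulVec, h1, ← mulVec_mulVec, h2, ← eM]
      abel
    exact congrFun key i
end

section
/- (Solution recovery) Suppose the vectors d_N ∈ ℝ^{nN}, d_M ∈ ℝ^{nM} satisfy Â · (d_N, d_M) = (f_N, f_M + Pᵀ · f_S) for given vectors f_N, f_M, f_S. Define d_S := P · d_M and λ := (Dᵀ)⁻¹ · (f_S − K_SN · d_N − K_SS · d_S). Then A · (d_N, d_M, d_S, λ) = (f_N, f_M, f_S, 0), i.e. (d_N, d_M, d_S, λ) solves the original saddle point system. -/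
open Matrix

/-- **Solution recovery.** If `(d_N, d_M)` solves the condensed system
`Â · (d_N, d_M) = (f_N, f_M + Pᵀ · f_S)` and we set `d_S := P · d_M` and
`λ := (Dᵀ)⁻¹ · (f_S − K_SN · d_N − K_SS · d_S)`, then `(d_N, d_M, d_S, λ)`
solves the original saddle point system `A · x = (f_N, f_M, f_S, 0)`. -/
theorem solution_recovery
    (nN nM nS : ℕ)
    (K_NN : Matrix (Fin nN) (Fin nN) ℝ) (K_MM : Matrix (Fin nM) (Fin nM) ℝ)
    (K_SS : Matrix (Fin nS) (Fin nS) ℝ)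
    (K_NM : Matrix (Fin nN) (Fin nM) ℝ) (K_NS : Matrix (Fin nN) (Fin nS) ℝ)
    (hNN : K_NN.IsSymm) (hMM : K_MM.IsSymm) (hSS : K_SS.IsSymm)
    (D : Matrix (Fin nS) (Fin nS) ℝ) (M : Matrix (Fin nS) (Fin nM) ℝ)
    (hD : IsUnit D.det)
    (P : Matrix (Fin nS) (Fin nM) ℝ) (hP : P = D⁻¹ * M)
    -- the saddle point matrix, block order N, M, S, λ
    (A : Matrix ((Fin nN ⊕ Fin nM) ⊕ (Fin nS ⊕ Fin nS))
                ((Fin nN ⊕ Fin nM) ⊕ (Fin nS ⊕ Fin nS)) ℝ)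
    (hA : A = fromBlocks
      (fromBlocks K_NN K_NM K_NMᵀ K_MM)
      (fromBlocks K_NS 0 0 (-Mᵀ))
      (fromBlocks K_NSᵀ 0 0 (-M))
      (fromBlocks K_SS Dᵀ D 0))
    -- the condensed matrix
    (Ahat : Matrix (Fin nN ⊕ Fin nM) (Fin nN ⊕ Fin nM) ℝ)
    (hAhat : Ahat = fromBlocks
      K_NN (K_NM + K_NS * P)
      (K_NMᵀ + Pᵀ * K_NSᵀ) (K_MM + Pᵀ * K_SS * P))
    (dN fN : Fin nN → ℝ) (dM fM : Fin nM → ℝ) (fS : Fin nS → ℝ)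
    (hsol : Ahat.mulVec (Sum.elim dN dM) = Sum.elim fN (fM + Pᵀ.mulVec fS))
    (dS lam : Fin nS → ℝ)
    (hdS : dS = P.mulVec dM)
    (hlam : lam = (Dᵀ)⁻¹.mulVec (fS - K_NSᵀ.mulVec dN - K_SS.mulVec dS)) :
    A.mulVec (Sum.elim (Sum.elim dN dM) (Sum.elim dS lam)) =
      Sum.elim (Sum.elim fN fM) (Sum.elim fS 0) := by

  subst hA hAhat
  rw [fromBlocks_mulVec] at hsol
  simp only [Sum.elim_comp_inl, Sum.elim_comp_inr] at hsol
  have h1 : K_NN.mulVec dN + (K_NM + K_NS * P).mulVec dM = fN :=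
    funext fun i => congrFun hsol (Sum.inl i)
  have h2 : (K_NMᵀ + Pᵀ * K_NSᵀ).mulVec dN + (K_MM + Pᵀ * K_SS * P).mulVec dM
      = fM + Pᵀ.mulVec fS :=
    funext fun i => congrFun hsol (Sum.inr i)
  have hDt : IsUnit (Dᵀ).det := by rwa [Matrix.det_transpose]
  have hDDinv : D * D⁻¹ = 1 := Matrix.mul_nonsing_inv D hD
  have hDtinv : Dᵀ * (Dᵀ)⁻¹ = 1 := Matrix.mul_nonsing_inv _ hDt
  have hPT : Mᵀ * (Dᵀ)⁻¹ = Pᵀ := by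
    rw [hP, Matrix.transpose_mul, Matrix.transpose_nonsing_inv]
  -- row S
  have e3 : Dᵀ.mulVec lam = fS - K_NSᵀ.mulVec dN - K_SS.mulVec dS := by
    rw [hlam, Matrix.mulVec_mulVec, hDtinv, Matrix.one_mulVec]
  -- row λ
  have e4 : D.mulVec dS = M.mulVec dM := by
    rw [hdS, Matrix.mulVec_mulVec, hP, ← Matrix.mul_assoc, hDDinv, Matrix.one_mul]
  -- row N
  have e1 : K_NN.mulVec dN + (K_NM.mulVec dM + K_NS.mulVec dS) = fN := by
    rw [← h1, Matrix.add_mulVec, hdS, Matrix.mulVec_mulVec]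
  -- row M
  have e2 : K_NMᵀ.mulVec dN + K_MM.mulVec dM - Mᵀ.mulVec lam = fM := by
    have hMl : Mᵀ.mulVec lam = Pᵀ.mulVec (fS - K_NSᵀ.mulVec dN - K_SS.mulVec dS) := by
      rw [hlam, Matrix.mulVec_mulVec, hPT]
    have h2' : K_NMᵀ.mulVec dN + Pᵀ.mulVec (K_NSᵀ.mulVec dN)
        + (K_MM.mulVec dM + Pᵀ.mulVec (K_SS.mulVec dS)) = fM + Pᵀ.mulVec fS := by
      rw [← h2, Matrix.add_mulVec, Matrix.add_mulVec, hdS]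
      simp [Matrix.mulVec_mulVec, Matrix.mul_assoc]
    rw [hMl]
    have := Matrix.mulVec_sub Pᵀ (fS - K_NSᵀ.mulVec dN) (K_SS.mulVec dS)
    rw [Matrix.mulVec_sub, Matrix.mulVec_sub] at *
    linear_combination (norm := abel) h2'
  rw [fromBlocks_mulVec]
  simp only [fromBlocks_mulVec, Sum.elim_comp_inl, Sum.elim_comp_inr]
  funext x
  rcases x with (i | i) | (i | i)
  · have := congrFun e1 i
    simp only [Pi.add_apply] at this
    simp [this]
    linarith [this]
  · have := congrFun e2 i
    simp only [Pi.add_apply, Pi.sub_apply] at this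
    simp [Matrix.neg_mulVec]
    linarith [this]
  · have := congrFun e3 i
    simp only [Pi.sub_apply] at this
    simp
    linarith [this]
  · have := congrFun e4 i
    simp [Matrix.neg_mulVec]
    linarith [this]
end

section
/- (Condensed matrix via the elimination matrix F = C·T) Let A' be the saddle point matrix in block order S, N, M, λ: A' = [[K_SS, K_SN, 0, Dᵀ], [K_NS, K_NN, K_NM, 0], [0, K_MN, K_MM, −Mᵀ], [D, 0, −M, 0]], let T = [[I_nS, 0, 0, 0], [0, I_nN, 0, 0], [Pᵀ, 0, I_nM, 0], [0, 0, 0, I_nS]], and let C be the (nN+nM)×(nN+nM+2·nS) selection matrix [[0, I_nN, 0, 0], [0, 0, I_nM, 0]]. Then (C·T) · A' · (C·T)ᵀ = Â, where Â = [[K_NN, K_NM + K_NS·P], [K_MN + Pᵀ·K_SN, K_MM + Pᵀ·K_SS·P]]. -/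
/-!
The selection matrix `C` keeps the `N` and `M` rows of `T`, so `F = C·T = [[0, I, 0, 0],
[Pᵀ, 0, I, 0]]`. The `λ`-columns of `F` vanish, so `F A' Fᵀ` only sees the `S, N, M` blocks of
`A'` (in particular not `D` and `M`): the `N` row of `F` picks out `K_NN` and `K_NM`, while the
`M` row adds `Pᵀ` times the `S` row, which produces the corrections `Pᵀ K_S*` and `K_*S P`.
-/

open Matrix

namespace Matrix

variable {R s n m l : Type*} [Semiring R] [Fintype s] [Fintype n] [Fintype m] [Fintype l]

def eliminationMatrix [DecidableEq n] [DecidableEq m] (X : Matrix m s R) :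
    Matrix (n ⊕ m) ((s ⊕ n) ⊕ (m ⊕ l)) R :=
  fromBlocks (fromCols 0 1) 0 (fromCols X 0) (fromCols 1 0)

theorem selection_mul_transformation_eq_eliminationMatrix [DecidableEq s] [DecidableEq n]
    [DecidableEq m] [DecidableEq l] (X : Matrix m s R) :
    (fromBlocks (fromCols 0 1) 0 0 (fromCols 1 0) : Matrix (n ⊕ m) ((s ⊕ n) ⊕ (m ⊕ l)) R) *
        (fromBlocks 1 0 (fromBlocks X 0 0 0) 1 : Matrix ((s ⊕ n) ⊕ (m ⊕ l)) ((s ⊕ n) ⊕ (m ⊕ l)) R) =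
      eliminationMatrix X := by
  simp only [eliminationMatrix, fromBlocks_multiply, fromCols_mul_fromBlocks, Matrix.mul_one,
    Matrix.mul_zero, Matrix.zero_mul, Matrix.one_mul, add_zero, zero_add]

theorem eliminationMatrix_mul_mul_transpose [DecidableEq n] [DecidableEq m] (X : Matrix m s R)
    (A₁₁ : Matrix s s R) (A₁₂ : Matrix s n R) (A₂₁ : Matrix n s R) (A₂₂ : Matrix n n R)
    (B₁₁ : Matrix s m R) (B₁₂ : Matrix s l R) (B₂₁ : Matrix n m R) (B₂₂ : Matrix n l R)
    (C₁₁ : Matrix m s R) (C₁₂ : Matrix m n R) (C₂₁ : Matrix l s R) (C₂₂ : Matrix l n R)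
    (E₁₁ : Matrix m m R) (E₁₂ : Matrix m l R) (E₂₁ : Matrix l m R) (E₂₂ : Matrix l l R) :
    eliminationMatrix (n := n) (l := l) X *
          fromBlocks (fromBlocks A₁₁ A₁₂ A₂₁ A₂₂) (fromBlocks B₁₁ B₁₂ B₂₁ B₂₂)
            (fromBlocks C₁₁ C₁₂ C₂₁ C₂₂) (fromBlocks E₁₁ E₁₂ E₂₁ E₂₂) *
        (eliminationMatrix (n := n) (l := l) X)ᵀ =
      fromBlocks A₂₂ (B₂₁ + A₂₁ * Xᵀ) (C₁₂ + X * A₁₂)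
        (E₁₁ + X * B₁₁ + (C₁₁ + X * A₁₁) * Xᵀ) := by
  simp only [eliminationMatrix, fromBlocks_multiply, fromBlocks_transpose, transpose_fromCols,
    fromCols_mul_fromBlocks, fromCols_mul_fromRows, Matrix.add_mul, transpose_zero,
    transpose_one, Matrix.mul_zero, Matrix.zero_mul, Matrix.mul_one, Matrix.one_mul, add_zero,
    zero_add]
  congr 1 <;> abel

end Matrix

theorem condensed_matrix_via_elimination_matrix_general
    (nN nM nS : ℕ)
    (K_NN : Matrix (Fin nN) (Fin nN) ℝ) (K_MM : Matrix (Fin nM) (Fin nM) ℝ)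
    (K_SS : Matrix (Fin nS) (Fin nS) ℝ)
    (K_NM : Matrix (Fin nN) (Fin nM) ℝ) (K_NS : Matrix (Fin nN) (Fin nS) ℝ)
    (D : Matrix (Fin nS) (Fin nS) ℝ) (M : Matrix (Fin nS) (Fin nM) ℝ)
    (P : Matrix (Fin nS) (Fin nM) ℝ)
    -- the saddle point matrix, block order S, N, M, λ
    (A' : Matrix ((Fin nS ⊕ Fin nN) ⊕ (Fin nM ⊕ Fin nS))
                 ((Fin nS ⊕ Fin nN) ⊕ (Fin nM ⊕ Fin nS)) ℝ)
    (hA' : A' = fromBlocks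
      (fromBlocks K_SS K_NSᵀ K_NS K_NN)
      (fromBlocks 0 Dᵀ K_NM 0)
      (fromBlocks 0 K_NMᵀ D 0)
      (fromBlocks K_MM (-Mᵀ) (-M) 0))
    -- the block elementary transformation matrix T
    (T : Matrix ((Fin nS ⊕ Fin nN) ⊕ (Fin nM ⊕ Fin nS))
                ((Fin nS ⊕ Fin nN) ⊕ (Fin nM ⊕ Fin nS)) ℝ)
    (hT : T = fromBlocks 1 0 (fromBlocks Pᵀ 0 0 0) 1)
    -- the selection (condensation) matrix C = [[0, I, 0, 0], [0, 0, I, 0]]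
    (C : Matrix (Fin nN ⊕ Fin nM) ((Fin nS ⊕ Fin nN) ⊕ (Fin nM ⊕ Fin nS)) ℝ)
    (hC : C = fromBlocks (fromCols 0 1) 0 0 (fromCols 1 0))
    -- the condensed matrix
    (Ahat : Matrix (Fin nN ⊕ Fin nM) (Fin nN ⊕ Fin nM) ℝ)
    (hAhat : Ahat = fromBlocks
      K_NN (K_NM + K_NS * P)
      (K_NMᵀ + Pᵀ * K_NSᵀ) (K_MM + Pᵀ * K_SS * P)) :
    (C * T) * A' * (C * T)ᵀ = Ahat := by
  subst hA' hT hC hAhat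
  rw [selection_mul_transformation_eq_eliminationMatrix, eliminationMatrix_mul_mul_transpose,
    transpose_transpose, Matrix.mul_zero, zero_add, add_zero]

/-- **Condensed matrix via the elimination matrix `F = C·T`.** With the saddle
point matrix `A'` in block order S, N, M, λ, the transformation matrix `T`, and
the selection matrix `C = [[0,I,0,0],[0,0,I,0]]`, one has
`(C·T) · A' · (C·T)ᵀ = Â`. -/
theorem condensed_matrix_via_elimination_matrix
    (nN nM nS : ℕ)
    (K_NN : Matrix (Fin nN) (Fin nN) ℝ) (K_MM : Matrix (Fin nM) (Fin nM) ℝ)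
    (K_SS : Matrix (Fin nS) (Fin nS) ℝ)
    (K_NM : Matrix (Fin nN) (Fin nM) ℝ) (K_NS : Matrix (Fin nN) (Fin nS) ℝ)
    (hNN : K_NN.IsSymm) (hMM : K_MM.IsSymm) (hSS : K_SS.IsSymm)
    (D : Matrix (Fin nS) (Fin nS) ℝ) (M : Matrix (Fin nS) (Fin nM) ℝ)
    (hD : IsUnit D.det)
    (P : Matrix (Fin nS) (Fin nM) ℝ) (hP : P = D⁻¹ * M)
    -- the saddle point matrix, block order S, N, M, λ
    (A' : Matrix ((Fin nS ⊕ Fin nN) ⊕ (Fin nM ⊕ Fin nS))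
                 ((Fin nS ⊕ Fin nN) ⊕ (Fin nM ⊕ Fin nS)) ℝ)
    (hA' : A' = fromBlocks
      (fromBlocks K_SS K_NSᵀ K_NS K_NN)
      (fromBlocks 0 Dᵀ K_NM 0)
      (fromBlocks 0 K_NMᵀ D 0)
      (fromBlocks K_MM (-Mᵀ) (-M) 0))
    -- the block elementary transformation matrix T
    (T : Matrix ((Fin nS ⊕ Fin nN) ⊕ (Fin nM ⊕ Fin nS))
                ((Fin nS ⊕ Fin nN) ⊕ (Fin nM ⊕ Fin nS)) ℝ)
    (hT : T = fromBlocks 1 0 (fromBlocks Pᵀ 0 0 0) 1)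
    -- the selection (condensation) matrix C = [[0, I, 0, 0], [0, 0, I, 0]]
    (C : Matrix (Fin nN ⊕ Fin nM) ((Fin nS ⊕ Fin nN) ⊕ (Fin nM ⊕ Fin nS)) ℝ)
    (hC : C = fromBlocks (fromCols 0 1) 0 0 (fromCols 1 0))
    -- the condensed matrix
    (Ahat : Matrix (Fin nN ⊕ Fin nM) (Fin nN ⊕ Fin nM) ℝ)
    (hAhat : Ahat = fromBlocks
      K_NN (K_NM + K_NS * P)
      (K_NMᵀ + Pᵀ * K_NSᵀ) (K_MM + Pᵀ * K_SS * P)) :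
    (C * T) * A' * (C * T)ᵀ = Ahat :=
  condensed_matrix_via_elimination_matrix_general nN nM nS K_NN K_MM K_SS K_NM K_NS D M P A' hA' T
    hT C hC Ahat hAhat
end

section
/- (Forward substitution correctness) Under the tridiagonal setup with all pivots u i nonzero, let L be the n×n unit lower bidiagonal matrix with L i i = 1, L i (i−1) = l i for i ≥ 1, and all other entries 0. Let m be any natural number and M an n×m real matrix. Define the n×m matrix Y row-wise by Y(0,·) = M(0,·) and Y(i,·) = M(i,·) − l i · Y(i−1,·) for i ≥ 1. Then L · Y = M. -/
open Matrix

/-- **Forward substitution correctness.** With the unit lower bidiagonal matrix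
`L` from the Thomas algorithm (all pivots nonzero) and `Y` defined row-wise by
`Y(0,·) = M(0,·)` and `Y(i,·) = M(i,·) − l i · Y(i−1,·)` for `i ≥ 1`, one has
`L · Y = M`. -/
theorem forward_substitution_correct
    (n : ℕ) (hn : 1 ≤ n) (d a c : Fin n → ℝ)
    (u l : Fin n → ℝ)
    (hu0 : ∀ i : Fin n, (i : ℕ) = 0 → u i = d i)
    (hl : ∀ i j : Fin n, (i : ℕ) = (j : ℕ) + 1 → l i = a i / u j)
    (hu : ∀ i j : Fin n, (i : ℕ) = (j : ℕ) + 1 → u i = d i - l i * c j)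
    (hpiv : ∀ i : Fin n, u i ≠ 0)
    (L : Matrix (Fin n) (Fin n) ℝ)
    (hL : ∀ i j : Fin n, L i j =
      if i = j then 1
      else if (i : ℕ) = (j : ℕ) + 1 then l i
      else 0)
    (m : ℕ) (M Y : Matrix (Fin n) (Fin m) ℝ)
    (hY0 : ∀ i : Fin n, (i : ℕ) = 0 → ∀ j : Fin m, Y i j = M i j)
    (hYrec : ∀ i i' : Fin n, (i : ℕ) = (i' : ℕ) + 1 → ∀ j : Fin m,
      Y i j = M i j - l i * Y i' j) :
    L * Y = M := by
  ext i j
  rw [Matrix.mul_apply]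
  rcases Nat.eq_zero_or_eq_succ_pred (i : ℕ) with h0 | h1
  · rw [Finset.sum_eq_single i]
    · rw [hL, if_pos rfl, one_mul, hY0 i h0 j]
    · intro k _ hk
      rw [hL, if_neg (Ne.symm hk), if_neg, zero_mul]
      omega
    · simp
  · have hi : 0 < (i : ℕ) := by omega
    set i' : Fin n := ⟨(i : ℕ) - 1, by omega⟩ with hi'
    have hii' : (i : ℕ) = (i' : ℕ) + 1 := by simp [hi']; omega
    have hne : i' ≠ i := by
      intro h; rw [h] at hii'; omega
    rw [Finset.sum_eq_add_of_mem i' i (Finset.mem_univ _) (Finset.mem_univ _) hne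
      (fun k _ hk => by
        rw [hL, if_neg (fun h => hk.2 h.symm), if_neg, zero_mul]
        have h1 := hk.1; have h2 := hk.2
        intro h
        exact h1 (Fin.ext (by omega)))]
    rw [hL, hL, if_neg (fun h => hne h.symm), if_pos hii', if_pos rfl, one_mul,
      hYrec i i' hii' j]
    ring
end

section
/- (Backward substitution correctness) Under the tridiagonal setup with all pivots u i nonzero, let U be the n×n upper bidiagonal matrix with U i i = u i, U i (i+1) = c i for i ≤ n−2, and all other entries 0. Let m be any natural number and Y an n×m real matrix. Define the n×m matrix P row-wise by P(n−1,·) = (1/u(n−1)) · Y(n−1,·) and P(i,·) = (1/u i) · (Y(i,·) − c i · P(i+1,·)) for i ≤ n−2. Then U · P = Y. -/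
open Matrix

section UpperBidiagonal

variable {R : Type*} [Semiring R] {n m : ℕ}

def upperBidiagonal (u c : Fin n → R) : Matrix (Fin n) (Fin n) R :=
  Matrix.of fun i j => if i = j then u i else if (j : ℕ) = (i : ℕ) + 1 then c i else 0

theorem upperBidiagonal_mul_apply_of_val_add_one_eq (u c : Fin n → R)
    (P : Matrix (Fin n) (Fin m) R) {i : Fin n} (hi : (i : ℕ) + 1 = n) (j : Fin m) :
    (upperBidiagonal u c * P) i j = u i * P i j := by
  rw [mul_apply, Finset.sum_eq_single i]
  · simp [upperBidiagonal]
  · intro k _ hki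
    have hk : (k : ℕ) ≠ (i : ℕ) + 1 := by omega
    simp [upperBidiagonal, Ne.symm hki, hk]
  · simp

theorem upperBidiagonal_mul_apply_of_val_add_one_lt (u c : Fin n → R)
    (P : Matrix (Fin n) (Fin m) R) {i : Fin n} (hi : (i : ℕ) + 1 < n) (j : Fin m) :
    (upperBidiagonal u c * P) i j = u i * P i j + c i * P ⟨i + 1, hi⟩ j := by
  have hne : i ≠ ⟨i + 1, hi⟩ := fun h => by simpa using congrArg Fin.val h
  rw [mul_apply, Finset.sum_eq_add_of_mem i _ (Finset.mem_univ _) (Finset.mem_univ _) hne]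
  · simp [upperBidiagonal, hne]
  · rintro k - ⟨hki, hk⟩
    have hk' : (k : ℕ) ≠ (i : ℕ) + 1 := fun h => hk (Fin.ext h)
    simp [upperBidiagonal, Ne.symm hki, hk']

end UpperBidiagonal

theorem backward_substitution_correct_general
    (n : ℕ) (c : Fin n → ℝ)
    (u : Fin n → ℝ)
    (hpiv : ∀ i : Fin n, u i ≠ 0)
    (U : Matrix (Fin n) (Fin n) ℝ)
    (hU : ∀ i j : Fin n, U i j =
      if i = j then u i
      else if (j : ℕ) = (i : ℕ) + 1 then c i
      else 0)
    (m : ℕ) (Y P : Matrix (Fin n) (Fin m) ℝ)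
    (hPlast : ∀ i : Fin n, (i : ℕ) + 1 = n → ∀ j : Fin m,
      P i j = (1 / u i) * Y i j)
    (hPrec : ∀ i i' : Fin n, (i' : ℕ) = (i : ℕ) + 1 → ∀ j : Fin m,
      P i j = (1 / u i) * (Y i j - c i * P i' j)) :
    U * P = Y := by
  obtain rfl : U = upperBidiagonal u c := Matrix.ext hU
  ext i j
  rcases (Nat.succ_le_of_lt i.isLt).eq_or_lt with hlast | hinner
  · rw [upperBidiagonal_mul_apply_of_val_add_one_eq u c P hlast, hPlast i hlast j]
    field_simp [hpiv i]
  · rw [upperBidiagonal_mul_apply_of_val_add_one_lt u c P hinner, hPrec i ⟨i + 1, hinner⟩ rfl j]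
    field_simp [hpiv i]
    ring

/-- **Backward substitution correctness.** With the upper bidiagonal matrix `U`
from the Thomas algorithm (all pivots nonzero) and `P` defined row-wise by
`P(n−1,·) = (1/u(n−1)) · Y(n−1,·)` and
`P(i,·) = (1/u i) · (Y(i,·) − c i · P(i+1,·))` for `i ≤ n−2`, one has
`U · P = Y`. -/
theorem backward_substitution_correct
    (n : ℕ) (hn : 1 ≤ n) (d a c : Fin n → ℝ)
    (u l : Fin n → ℝ)
    (hu0 : ∀ i : Fin n, (i : ℕ) = 0 → u i = d i)
    (hl : ∀ i j : Fin n, (i : ℕ) = (j : ℕ) + 1 → l i = a i / u j)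
    (hu : ∀ i j : Fin n, (i : ℕ) = (j : ℕ) + 1 → u i = d i - l i * c j)
    (hpiv : ∀ i : Fin n, u i ≠ 0)
    (U : Matrix (Fin n) (Fin n) ℝ)
    (hU : ∀ i j : Fin n, U i j =
      if i = j then u i
      else if (j : ℕ) = (i : ℕ) + 1 then c i
      else 0)
    (m : ℕ) (Y P : Matrix (Fin n) (Fin m) ℝ)
    (hPlast : ∀ i : Fin n, (i : ℕ) + 1 = n → ∀ j : Fin m,
      P i j = (1 / u i) * Y i j)
    (hPrec : ∀ i i' : Fin n, (i' : ℕ) = (i : ℕ) + 1 → ∀ j : Fin m,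
      P i j = (1 / u i) * (Y i j - c i * P i' j)) :
    U * P = Y :=
  backward_substitution_correct_general n c u hpiv U hU m Y P hPlast hPrec
end
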